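/- arXiv:1502.05136 — 2 statements merged into one kernel-verified Lean document; each statement's English description precedes it below -/
import Mathlib

section
/- Let A and B be Banach algebras and T ∈ hom(B, A). If Φ ∈ Z_t^{(ℓ)}(A'') and Ψ ∈ Z_t^{(ℓ)}(B''), then (Φ − T''(Ψ), Ψ) ∈ Z_t^{(ℓ)}((A ×_T B)''). -/
open ContinuousLinearMap NormedSpace

variable {A B : Type*}
  [NonUnitalNormedRing A] [NormedSpace ℂ A] [IsScalarTower ℂ A A] [SMulCommClass ℂ A A]
  [CompleteSpace A]
  [NonUnitalNormedRing B] [NormedSpace ℂ B] [IsScalarTower ℂ B B] [SMulCommClass ℂ B B]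
  [CompleteSpace B]

/-- The morphism-product multiplication on `A × B`:
`(a₁,b₁)·(a₂,b₂) = (a₁a₂ + a₁T(b₂) + T(b₁)a₂, b₁b₂)`. -/
noncomputable def tMul (T : B →L[ℂ] A) (u v : A × B) : A × B :=
  (u.1 * v.1 + u.1 * T v.2 + T u.2 * v.1, u.2 * v.2)

/-- The ℓ¹ norm `‖(a,b)‖ = ‖a‖ + ‖b‖` on `A × B`. -/
noncomputable def tNorm (u : A × B) : ℝ := ‖u.1‖ + ‖u.2‖

/-- Auxiliary map: for `Φ` in the second dual of `E` and a bundled bilinear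
multiplication `M` on `E`, this is `f ↦ (a ↦ Φ (f ∘ M a))`, i.e. `f ↦ Φ · f`. -/
noncomputable def rAct {E : Type*} [NormedAddCommGroup E] [NormedSpace ℂ E]
    (M : E →L[ℂ] E →L[ℂ] E) (Φ : StrongDual ℂ (StrongDual ℂ E)) : StrongDual ℂ E →L[ℂ] StrongDual ℂ E :=
  (compL ℂ E (StrongDual ℂ E) ℂ Φ).comp
    (((compL ℂ E (E →L[ℂ] E) (StrongDual ℂ E)).flip M).comp (compL ℂ E E ℂ))

/-- The first Arens product `Φ □ Ψ` on the second dual of `E`, where the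
multiplication of `E` is given by the bundled bilinear map `M`:
`⟨Φ□Ψ, f⟩ = ⟨Φ, Ψ·f⟩` with `(Ψ·f)(a) = Ψ(f·a)` and `(f·a)(x) = f(ax)`. -/
noncomputable def arens1 {E : Type*} [NormedAddCommGroup E] [NormedSpace ℂ E]
    (M : E →L[ℂ] E →L[ℂ] E) (Φ Ψ : StrongDual ℂ (StrongDual ℂ E)) : StrongDual ℂ (StrongDual ℂ E) :=
  Φ.comp (rAct M Ψ)

/-- The second Arens product `Φ ◊ Ψ` on the second dual of `E`:
`⟨Φ◊Ψ, f⟩ = ⟨Ψ, f·Φ⟩` with `(f·Φ)(a) = Φ(a·f)` and `(a·f)(x) = f(xa)`. -/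
noncomputable def arens2 {E : Type*} [NormedAddCommGroup E] [NormedSpace ℂ E]
    (M : E →L[ℂ] E →L[ℂ] E) (Φ Ψ : StrongDual ℂ (StrongDual ℂ E)) : StrongDual ℂ (StrongDual ℂ E) :=
  Ψ.comp (rAct M.flip Φ)

/-- Bundled bilinear map `(u,v) ↦ M (f u) (g v)`. -/
noncomputable def bcomp {P E : Type*} [NormedAddCommGroup P] [NormedSpace ℂ P]
    [NormedAddCommGroup E] [NormedSpace ℂ E]
    (M : E →L[ℂ] E →L[ℂ] E) (f g : P →L[ℂ] E) : P →L[ℂ] P →L[ℂ] E :=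
  ((compL ℂ P E E).flip g).comp (M.comp f)

/-- The morphism-product multiplication `tMul T`, as a bundled bilinear map;
`tMulCLM T u v = tMul T u v`. -/
noncomputable def tMulCLM (T : B →L[ℂ] A) : (A × B) →L[ℂ] (A × B) →L[ℂ] (A × B) :=
  ((compL ℂ (A × B) A (A × B) (inl ℂ A B)).comp
    (bcomp (mul ℂ A) (fst ℂ A B) (fst ℂ A B + T.comp (snd ℂ A B)) +
     bcomp (mul ℂ A) (T.comp (snd ℂ A B)) (fst ℂ A B))) +
  ((compL ℂ (A × B) B (A × B) (inr ℂ A B)).comp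
    (bcomp (mul ℂ B) (snd ℂ A B) (snd ℂ A B)))

/-- The adjoint `T' : A' → B'`, `T'(f) = f ∘ T`. -/
noncomputable def dualT (T : B →L[ℂ] A) : StrongDual ℂ A →L[ℂ] StrongDual ℂ B := (compL ℂ B A ℂ).flip T

/-- The double adjoint `T'' : B'' → A''`, `T''(F) = F ∘ T'`. -/
noncomputable def ddT (T : B →L[ℂ] A) : StrongDual ℂ (StrongDual ℂ B) →L[ℂ] StrongDual ℂ (StrongDual ℂ A) :=
  (compL ℂ (StrongDual ℂ A) (StrongDual ℂ B) ℂ).flip (dualT T)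

/-- The identification `Θ : A'' × B'' → (A × B)''`, `Θ(Φ,Ψ)(F) = Φ(F∘inl) + Ψ(F∘inr)`,
i.e. `Θ(Φ,Ψ)(f,g) = Φ(f) + Ψ(g)` under the identification `(A × B)' ≅ A' × B'`. -/
noncomputable def Theta (Φ : StrongDual ℂ (StrongDual ℂ A)) (Ψ : StrongDual ℂ (StrongDual ℂ B)) :
    StrongDual ℂ (StrongDual ℂ (A × B)) :=
  Φ.comp ((compL ℂ A (A × B) ℂ).flip (inl ℂ A B)) +
  Ψ.comp ((compL ℂ B (A × B) ℂ).flip (inr ℂ A B))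

/-- The functional `(a,b) ↦ φ(a) + φ(T(b))` on `A × B`, for `φ : A → ℂ`. -/
noncomputable def charExt (T : B →L[ℂ] A) (φ : A →L[ℂ] ℂ) : (A × B) →L[ℂ] ℂ :=
  φ.comp (fst ℂ A B) + (φ.comp T).comp (snd ℂ A B)

/-- The functional `(a,b) ↦ ψ(b)` on `A × B`, for `ψ : B → ℂ`. -/
noncomputable def charSnd (ψ : B →L[ℂ] ℂ) : (A × B) →L[ℂ] ℂ :=
  ψ.comp (snd ℂ A B)

/-!
The shear `θ(a, b) = (a + T b, b)` is an algebra isomorphism from `A ×_T B` onto the direct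
product `A × B`, because `T` is multiplicative. Both Arens products are natural with respect to
biadjoints of multiplicative maps, so `θ⁻¹''` carries the left topological centre of
`(A × B)''` into that of `(A ×_T B)''`. For the direct product the Arens products split
componentwise, so `(Φ, Ψ)` lies in the left topological centre of `(A × B)''`, and
`θ⁻¹''(Φ, Ψ) = (Φ − T''Ψ, Ψ)`.
-/

section Arens

variable {E F G : Type*} [NormedAddCommGroup E] [NormedSpace ℂ E]
  [NormedAddCommGroup F] [NormedSpace ℂ F] [NormedAddCommGroup G] [NormedSpace ℂ G]

/-- The left topological centre `Z_t^{(ℓ)}` of `E''` for the multiplication `M`. -/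
def leftTopCenter (M : E →L[ℂ] E →L[ℂ] E) : Set (StrongDual ℂ (StrongDual ℂ E)) :=
  {X | ∀ Y, arens1 M X Y = arens2 M X Y}

noncomputable def bidualMap (S : E →L[ℂ] F) :
    StrongDual ℂ (StrongDual ℂ E) →L[ℂ] StrongDual ℂ (StrongDual ℂ F) :=
  (compL ℂ (StrongDual ℂ F) (StrongDual ℂ E) ℂ).flip ((compL ℂ E F ℂ).flip S)

lemma bidualMap_surjective {S : E →L[ℂ] F} {R : F →L[ℂ] E} (h : Function.RightInverse R S) :
    Function.Surjective (bidualMap S) := by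
  intro Y
  refine ⟨bidualMap R Y, ContinuousLinearMap.ext fun f => ?_⟩
  change Y ((f.comp S).comp R) = Y f
  congr 1
  ext y
  exact congrArg f (h y)

lemma bidualMap_inl_fst_add_inr_snd (W : StrongDual ℂ (StrongDual ℂ (E × F))) :
    bidualMap (inl ℂ E F) (bidualMap (fst ℂ E F) W) +
      bidualMap (inr ℂ E F) (bidualMap (snd ℂ E F) W) = W := by
  ext f
  change W ((f.comp (inl ℂ E F)).comp (fst ℂ E F)) + W ((f.comp (inr ℂ E F)).comp (snd ℂ E F)) = W f
  rw [← map_add]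
  congr 1
  ext u <;> simp [← map_add]

lemma arens2_eq_arens1_flip (M : E →L[ℂ] E →L[ℂ] E) (X Y : StrongDual ℂ (StrongDual ℂ E)) :
    arens2 M X Y = arens1 M.flip Y X := rfl

lemma arens1_add_left (M : E →L[ℂ] E →L[ℂ] E) (X X' Y : StrongDual ℂ (StrongDual ℂ E)) :
    arens1 M (X + X') Y = arens1 M X Y + arens1 M X' Y := rfl

lemma arens1_add_right (M : E →L[ℂ] E →L[ℂ] E) (X Y Y' : StrongDual ℂ (StrongDual ℂ E)) :
    arens1 M X (Y + Y') = arens1 M X Y + arens1 M X Y' := by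
  simp only [arens1, rAct, map_add, add_comp, comp_add]

lemma arens1_bidualMap {M : E →L[ℂ] E →L[ℂ] E} {N : F →L[ℂ] F →L[ℂ] F} {S : E →L[ℂ] F}
    (hS : ∀ u v, N (S u) (S v) = S (M u v)) (X Y : StrongDual ℂ (StrongDual ℂ E)) :
    arens1 N (bidualMap S X) (bidualMap S Y) = bidualMap S (arens1 M X Y) := by
  ext f
  change X ((rAct N (bidualMap S Y) f).comp S) = X (rAct M Y (f.comp S))
  congr 1
  ext a
  change Y ((f.comp (N (S a))).comp S) = Y ((f.comp S).comp (M a))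
  congr 1
  ext x
  exact congrArg f (hS a x)

lemma arens2_bidualMap {M : E →L[ℂ] E →L[ℂ] E} {N : F →L[ℂ] F →L[ℂ] F} {S : E →L[ℂ] F}
    (hS : ∀ u v, N (S u) (S v) = S (M u v)) (X Y : StrongDual ℂ (StrongDual ℂ E)) :
    arens2 N (bidualMap S X) (bidualMap S Y) = bidualMap S (arens2 M X Y) :=
  arens1_bidualMap (M := M.flip) (N := N.flip) (fun u v => hS v u) Y X

lemma arens1_bidualMap_eq_zero {N : G →L[ℂ] G →L[ℂ] G} {S : E →L[ℂ] G} {R : F →L[ℂ] G}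
    (h : ∀ u v, N (S u) (R v) = 0) (X : StrongDual ℂ (StrongDual ℂ E))
    (Y : StrongDual ℂ (StrongDual ℂ F)) :
    arens1 N (bidualMap S X) (bidualMap R Y) = 0 := by
  ext f
  change X ((rAct N (bidualMap R Y) f).comp S) = 0
  have hvanish : (rAct N (bidualMap R Y) f).comp S = 0 := by
    ext a
    change Y ((f.comp (N (S a))).comp R) = 0
    have hzero : (f.comp (N (S a))).comp R = 0 := by
      ext v
      simp [h]
    rw [hzero, map_zero]
  rw [hvanish, map_zero]

lemma arens1_prod {ME : E →L[ℂ] E →L[ℂ] E} {MF : F →L[ℂ] F →L[ℂ] F}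
    {MP : E × F →L[ℂ] E × F →L[ℂ] E × F} (hMP : ∀ u v, MP u v = (ME u.1 v.1, MF u.2 v.2))
    (X₁ X₂ : StrongDual ℂ (StrongDual ℂ E)) (Y₁ Y₂ : StrongDual ℂ (StrongDual ℂ F)) :
    arens1 MP (bidualMap (inl ℂ E F) X₁ + bidualMap (inr ℂ E F) Y₁)
        (bidualMap (inl ℂ E F) X₂ + bidualMap (inr ℂ E F) Y₂) =
      bidualMap (inl ℂ E F) (arens1 ME X₁ X₂) + bidualMap (inr ℂ E F) (arens1 MF Y₁ Y₂) := by
  rw [arens1_add_left, arens1_add_right, arens1_add_right,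
    arens1_bidualMap (M := ME) (by simp [hMP]), arens1_bidualMap (M := MF) (by simp [hMP]),
    arens1_bidualMap_eq_zero (by simp [hMP]), arens1_bidualMap_eq_zero (by simp [hMP]),
    add_zero, zero_add]

lemma mem_leftTopCenter_prod {ME : E →L[ℂ] E →L[ℂ] E} {MF : F →L[ℂ] F →L[ℂ] F}
    {MP : E × F →L[ℂ] E × F →L[ℂ] E × F} (hMP : ∀ u v, MP u v = (ME u.1 v.1, MF u.2 v.2))
    {X : StrongDual ℂ (StrongDual ℂ E)} {Y : StrongDual ℂ (StrongDual ℂ F)}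
    (hX : X ∈ leftTopCenter ME) (hY : Y ∈ leftTopCenter MF) :
    bidualMap (inl ℂ E F) X + bidualMap (inr ℂ E F) Y ∈ leftTopCenter MP := by
  intro W
  rw [← bidualMap_inl_fst_add_inr_snd W, arens2_eq_arens1_flip, arens1_prod hMP,
    arens1_prod (ME := ME.flip) (MF := MF.flip) (fun u v => hMP v u), hX, hY]
  rfl

lemma bidualMap_mem_leftTopCenter {M : E →L[ℂ] E →L[ℂ] E} {N : F →L[ℂ] F →L[ℂ] F}
    {S : E →L[ℂ] F} (hS : ∀ u v, N (S u) (S v) = S (M u v))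
    (hsurj : Function.Surjective (bidualMap S)) {X : StrongDual ℂ (StrongDual ℂ E)}
    (hX : X ∈ leftTopCenter M) : bidualMap S X ∈ leftTopCenter N := by
  intro Y
  obtain ⟨Y, rfl⟩ := hsurj Y
  rw [arens1_bidualMap hS, arens2_bidualMap hS, hX]

noncomputable def shear (T : F →L[ℂ] E) : E × F →L[ℂ] E × F :=
  (fst ℂ E F + T.comp (snd ℂ E F)).prod (snd ℂ E F)

lemma shear_apply (T : F →L[ℂ] E) (u : E × F) : shear T u = (u.1 + T u.2, u.2) := rfl

lemma shear_neg_rightInverse (T : F →L[ℂ] E) : Function.RightInverse (shear T) (shear (-T)) := by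
  intro u
  simp [shear_apply]

end Arens

section MorphismProduct

variable {E F : Type*} [NonUnitalNormedRing E] [NormedSpace ℂ E] [NonUnitalNormedRing F]
  [NormedSpace ℂ F]

lemma bidualMap_shear_neg_Theta (T : F →L[ℂ] E) (Φ : StrongDual ℂ (StrongDual ℂ E))
    (Ψ : StrongDual ℂ (StrongDual ℂ F)) :
    bidualMap (shear (-T)) (Theta Φ Ψ) = Theta (Φ - ddT T Ψ) Ψ := by
  ext f
  have hinl : (f.comp (shear (-T))).comp (inl ℂ E F) = f.comp (inl ℂ E F) := by
    ext a
    simp [shear_apply]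
  have hinr : (f.comp (shear (-T))).comp (inr ℂ E F) =
      f.comp (inr ℂ E F) - (f.comp (inl ℂ E F)).comp T := by
    ext b
    simp [shear_apply, ← map_sub]
  change Φ ((f.comp (shear (-T))).comp (inl ℂ E F)) + Ψ ((f.comp (shear (-T))).comp (inr ℂ E F)) =
    Φ (f.comp (inl ℂ E F)) - Ψ ((f.comp (inl ℂ E F)).comp T) + Ψ (f.comp (inr ℂ E F))
  rw [hinl, hinr, map_sub]
  ring

variable [IsScalarTower ℂ E E] [SMulCommClass ℂ E E] [IsScalarTower ℂ F F] [SMulCommClass ℂ F F]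

lemma tMulCLM_apply (T : F →L[ℂ] E) (u v : E × F) :
    tMulCLM T u v = (u.1 * v.1 + u.1 * T v.2 + T u.2 * v.1, u.2 * v.2) := by
  simp [tMulCLM, bcomp]

lemma tMulCLM_zero_apply (u v : E × F) :
    tMulCLM (0 : F →L[ℂ] E) u v = (mul ℂ E u.1 v.1, mul ℂ F u.2 v.2) := by
  simp [tMulCLM_apply]

lemma tMulCLM_shear_neg {T : F →L[ℂ] E} (hT : ∀ x y, T (x * y) = T x * T y) (u v : E × F) :
    tMulCLM T (shear (-T) u) (shear (-T) v) = shear (-T) (tMulCLM 0 u v) := by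
  simp only [tMulCLM_apply, shear_apply, zero_apply, neg_apply, hT]
  refine Prod.ext ?_ rfl
  dsimp only
  noncomm_ring

end MorphismProduct

theorem left_topological_center_sufficient_general
    (T : B →L[ℂ] A) (hT : ∀ x y, T (x * y) = T x * T y)
    (Φ : StrongDual ℂ (StrongDual ℂ A)) (Ψ : StrongDual ℂ (StrongDual ℂ B))
    (hΦ : ∀ Φ' : StrongDual ℂ (StrongDual ℂ A), arens1 (mul ℂ A) Φ Φ' = arens2 (mul ℂ A) Φ Φ')
    (hΨ : ∀ Ψ' : StrongDual ℂ (StrongDual ℂ B), arens1 (mul ℂ B) Ψ Ψ' = arens2 (mul ℂ B) Ψ Ψ') :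
    ∀ X : StrongDual ℂ (StrongDual ℂ (A × B)),
      arens1 (tMulCLM T) (Theta (Φ - ddT T Ψ) Ψ) X =
        arens2 (tMulCLM T) (Theta (Φ - ddT T Ψ) Ψ) X := by
  -- `Theta Φ Ψ` is definitionally `inl'' Φ + inr'' Ψ`.
  have hprod : Theta Φ Ψ ∈ leftTopCenter (tMulCLM (0 : B →L[ℂ] A)) :=
    mem_leftTopCenter_prod (ME := mul ℂ A) (MF := mul ℂ B) tMulCLM_zero_apply hΦ hΨ
  have hmul := tMulCLM_shear_neg hT
  have hsurj := bidualMap_surjective (shear_neg_rightInverse T)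
  have hcenter := bidualMap_mem_leftTopCenter hmul hsurj hprod
  rwa [bidualMap_shear_neg_Theta] at hcenter

/-- if `Φ` lies in the left topological center of `A''` and `Ψ` in that
of `B''`, then `(Φ − T''(Ψ), Ψ)` lies in the left topological center of `(A ×_T B)''`. -/
theorem left_topological_center_sufficient
    (T : B →L[ℂ] A) (hT : ∀ x y, T (x * y) = T x * T y) (hTn : ‖T‖ ≤ 1)
    (Φ : StrongDual ℂ (StrongDual ℂ A)) (Ψ : StrongDual ℂ (StrongDual ℂ B))
    (hΦ : ∀ Φ' : StrongDual ℂ (StrongDual ℂ A), arens1 (mul ℂ A) Φ Φ' = arens2 (mul ℂ A) Φ Φ')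
    (hΨ : ∀ Ψ' : StrongDual ℂ (StrongDual ℂ B), arens1 (mul ℂ B) Ψ Ψ' = arens2 (mul ℂ B) Ψ Ψ') :
    ∀ X : StrongDual ℂ (StrongDual ℂ (A × B)),
      arens1 (tMulCLM T) (Theta (Φ - ddT T Ψ) Ψ) X =
        arens2 (tMulCLM T) (Theta (Φ - ddT T Ψ) Ψ) X :=
  left_topological_center_sufficient_general T hT Φ Ψ hΦ hΨ
end

section
/- Let A and B be Banach algebras, T ∈ hom(B, A), and φ a character on A. An element (Φ,Ψ) ∈ A'' ×_{T''} B'' is (φ, φ∘T)-topologically left invariant with ⟨(Φ,Ψ),(φ,φ∘T)⟩ ≠ 0 if and only if Ψ = 0 and Φ is φ-topologically left invariant with Φ(φ) ≠ 0. -/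
/-!
On `F = (f, g) ∈ (A × B)'` the Arens product `Θ(Φ, Ψ) □ u` evaluates to
`Φ(f · (u₁ + T u₂)) + Ψ((f · u₁) ∘ T + g · u₂)`, where `(f · x)(y) = f(y x)`.
Testing invariance at `u = (a, 0)` with `φ(a) ≠ 0` against `F = (0, ψ)` leaves `φ(a) Ψ(ψ) = 0`,
so `Ψ = 0`; and for `Ψ = 0` the same formula turns `(φ, φ∘T)`-invariance of `Θ(Φ, 0)` into
`φ`-invariance of `Φ`. A nonzero pairing `Φ(φ) + Ψ(φ∘T)` already forces `φ ≠ 0`.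
-/

open ContinuousLinearMap NormedSpace

variable {A B : Type*}
  [NonUnitalNormedRing A] [NormedSpace ℂ A] [IsScalarTower ℂ A A] [SMulCommClass ℂ A A]
  [CompleteSpace A]
  [NonUnitalNormedRing B] [NormedSpace ℂ B] [IsScalarTower ℂ B B] [SMulCommClass ℂ B B]
  [CompleteSpace B]

def IsTopLeftInvariant {E : Type*} [NormedAddCommGroup E] [NormedSpace ℂ E]
    (M : E →L[ℂ] E →L[ℂ] E) (χ : E →L[ℂ] ℂ) (Φ : StrongDual ℂ (StrongDual ℂ E)) : Prop :=
  ∀ a : E, arens1 M Φ (inclusionInDoubleDual ℂ E a) = χ a • Φ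

lemma arens1_inclusionInDoubleDual_apply {E : Type*} [NormedAddCommGroup E] [NormedSpace ℂ E]
    (M : E →L[ℂ] E →L[ℂ] E) (Φ : StrongDual ℂ (StrongDual ℂ E)) (a : E) (f : StrongDual ℂ E) :
    arens1 M Φ (inclusionInDoubleDual ℂ E a) f = Φ (f.comp (M.flip a)) :=
  rfl

section Theta

omit [IsScalarTower ℂ A A] [SMulCommClass ℂ A A] [CompleteSpace A]
  [IsScalarTower ℂ B B] [SMulCommClass ℂ B B] [CompleteSpace B]

@[simp]
lemma Theta_apply (Φ : StrongDual ℂ (StrongDual ℂ A)) (Ψ : StrongDual ℂ (StrongDual ℂ B))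
    (F : StrongDual ℂ (A × B)) :
    Theta Φ Ψ F = Φ (F.comp (inl ℂ A B)) + Ψ (F.comp (inr ℂ A B)) :=
  rfl

@[simp]
lemma charExt_apply (T : B →L[ℂ] A) (φ : A →L[ℂ] ℂ) (u : A × B) :
    charExt T φ u = φ u.1 + φ (T u.2) :=
  rfl

end Theta

section MorphismProduct

omit [CompleteSpace A] [CompleteSpace B]

lemma tMulCLM_apply_s16 (T : B →L[ℂ] A) (u v : A × B) : tMulCLM T u v = tMul T u v := by
  simp [tMulCLM, bcomp, tMul]

lemma tMulCLM_flip_comp_inl (T : B →L[ℂ] A) (u : A × B) :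
    ((tMulCLM T).flip u).comp (inl ℂ A B) = (inl ℂ A B).comp ((mul ℂ A).flip (u.1 + T u.2)) := by
  ext a <;> simp [tMulCLM_apply_s16, tMul]

lemma tMulCLM_flip_comp_inr (T : B →L[ℂ] A) (u : A × B) :
    ((tMulCLM T).flip u).comp (inr ℂ A B) =
      (inl ℂ A B).comp (((mul ℂ A).flip u.1).comp T) + (inr ℂ A B).comp ((mul ℂ B).flip u.2) := by
  ext b <;> simp [tMulCLM_apply_s16, tMul]

lemma arens1_tMulCLM_Theta_apply (T : B →L[ℂ] A) (Φ : StrongDual ℂ (StrongDual ℂ A))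
    (Ψ : StrongDual ℂ (StrongDual ℂ B)) (u : A × B) (F : StrongDual ℂ (A × B)) :
    arens1 (tMulCLM T) (Theta Φ Ψ) (inclusionInDoubleDual ℂ (A × B) u) F =
      Φ ((F.comp (inl ℂ A B)).comp ((mul ℂ A).flip (u.1 + T u.2))) +
        Ψ ((F.comp (inl ℂ A B)).comp (((mul ℂ A).flip u.1).comp T) +
          (F.comp (inr ℂ A B)).comp ((mul ℂ B).flip u.2)) := by
  simp only [arens1_inclusionInDoubleDual_apply, Theta_apply, comp_assoc, tMulCLM_flip_comp_inl,
    tMulCLM_flip_comp_inr, comp_add]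

lemma eq_zero_of_isTopLeftInvariant_Theta {T : B →L[ℂ] A} {φ : A →L[ℂ] ℂ} (hφ : φ ≠ 0)
    {Φ : StrongDual ℂ (StrongDual ℂ A)} {Ψ : StrongDual ℂ (StrongDual ℂ B)}
    (h : IsTopLeftInvariant (tMulCLM T) (charExt T φ) (Theta Φ Ψ)) : Ψ = 0 := by
  obtain ⟨a, ha⟩ : ∃ a, φ a ≠ 0 := by
    by_contra! hzero
    exact hφ (ext hzero)
  ext ψ
  have hψ := congr($(h (a, 0)) ((0 : StrongDual ℂ A).coprod ψ))
  simpa [arens1_tMulCLM_Theta_apply, ha] using hψ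

lemma isTopLeftInvariant_Theta_zero_iff {T : B →L[ℂ] A} {φ : A →L[ℂ] ℂ}
    {Φ : StrongDual ℂ (StrongDual ℂ A)} :
    IsTopLeftInvariant (tMulCLM T) (charExt T φ) (Theta Φ 0) ↔
      IsTopLeftInvariant (mul ℂ A) φ Φ := by
  constructor
  · intro h a
    ext f
    rw [arens1_inclusionInDoubleDual_apply]
    simpa [arens1_tMulCLM_Theta_apply] using congr($(h (a, 0)) (f.coprod (0 : StrongDual ℂ B)))
  · intro h u
    ext F
    have hF := congr($(h (u.1 + T u.2)) (F.comp (inl ℂ A B)))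
    rw [arens1_inclusionInDoubleDual_apply] at hF
    simpa [arens1_tMulCLM_Theta_apply] using hF

end MorphismProduct

theorem tli_for_charExt_general
    (T : B →L[ℂ] A)
    (φ : A →L[ℂ] ℂ)
    (Φ : StrongDual ℂ (StrongDual ℂ A)) (Ψ : StrongDual ℂ (StrongDual ℂ B)) :
    ((∀ u : A × B,
        arens1 (tMulCLM T) (Theta Φ Ψ) (inclusionInDoubleDual ℂ (A × B) u) =
          (φ u.1 + φ (T u.2)) • Theta Φ Ψ) ∧
      Φ φ + Ψ (φ.comp T) ≠ 0) ↔
    (Ψ = 0 ∧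
      (∀ a : A, arens1 (mul ℂ A) Φ (inclusionInDoubleDual ℂ A a) = φ a • Φ) ∧
      Φ φ ≠ 0) := by
  change (IsTopLeftInvariant (tMulCLM T) (charExt T φ) (Theta Φ Ψ) ∧ _) ↔
    (_ ∧ IsTopLeftInvariant (mul ℂ A) φ Φ ∧ _)
  constructor
  · rintro ⟨h, hne⟩
    have hφ : φ ≠ 0 := by
      rintro rfl
      simp at hne
    obtain rfl := eq_zero_of_isTopLeftInvariant_Theta hφ h
    exact ⟨rfl, isTopLeftInvariant_Theta_zero_iff.1 h, by simpa using hne⟩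
  · rintro ⟨rfl, h, hne⟩
    exact ⟨isTopLeftInvariant_Theta_zero_iff.2 h, by simpa using hne⟩

/-- for a character `φ` on `A`, `(Φ,Ψ)` is `(φ,φ∘T)`-topologically left
invariant with `⟨(Φ,Ψ),(φ,φ∘T)⟩ = Φ(φ) + Ψ(φ∘T) ≠ 0` iff `Ψ = 0` and `Φ` is
`φ`-topologically left invariant with `Φ(φ) ≠ 0`. -/
theorem tli_for_charExt
    (T : B →L[ℂ] A) (hT : ∀ x y, T (x * y) = T x * T y) (hTn : ‖T‖ ≤ 1)
    (φ : A →L[ℂ] ℂ) (hφ0 : φ ≠ 0) (hφm : ∀ x y : A, φ (x * y) = φ x * φ y)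
    (Φ : StrongDual ℂ (StrongDual ℂ A)) (Ψ : StrongDual ℂ (StrongDual ℂ B)) :
    ((∀ u : A × B,
        arens1 (tMulCLM T) (Theta Φ Ψ) (inclusionInDoubleDual ℂ (A × B) u) =
          (φ u.1 + φ (T u.2)) • Theta Φ Ψ) ∧
      Φ φ + Ψ (φ.comp T) ≠ 0) ↔
    (Ψ = 0 ∧
      (∀ a : A, arens1 (mul ℂ A) Φ (inclusionInDoubleDual ℂ A a) = φ a • Φ) ∧
      Φ φ ≠ 0) :=
  tli_for_charExt_general T φ Φ Ψ
end
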